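/- arXiv:math/0508196 — 2 statements merged into one kernel-verified Lean document; each statement's English description precedes it below -/
import Mathlib

section
/- The quotient ring ZQ_{4n}/⟨x+1⟩ is isomorphic to the Gaussian integers Z[i], via x ↦ -1 and y ↦ i. -/
/-!
For odd `n`, sending `a i ↦ (-1)^i` and `xa i ↦ ι (-1)^i` is a monoid hom `Q_{4n} → R` whenever
`ι² = -1`: the only delicate relation `xa i * xa j = a (n + j - i)` holds because `(-1)^n = -1`.
With `ι = i ∈ ℤ[i]` it extends to a ring hom `f : ℤQ_{4n} → ℤ[i]`, split additively by
`s : p + q i ↦ p + y q`. Modulo `x + 1` we have `a i = x^i ≡ (-1)^i` and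
`xa i = y x^i ≡ y (-1)^i`, so every `z` satisfies `z ≡ s (f z)`; hence `f z = 0` forces
`z ∈ ⟨x + 1⟩`.
-/

open MonoidAlgebra

abbrev QR (n : ℕ) : Type := MonoidAlgebra ℤ (QuaternionGroup n)

noncomputable def Xq (n : ℕ) : QR n := of ℤ (QuaternionGroup n) (QuaternionGroup.a 1)
noncomputable def Yq (n : ℕ) : QR n := of ℤ (QuaternionGroup n) (QuaternionGroup.xa 0)

section NegOnePow

variable {R : Type*} [Monoid R] [HasDistribNeg R] {m : ℕ}

theorem neg_one_pow_mod_of_two_dvd (h : 2 ∣ m) (k : ℕ) : (-1 : R) ^ (k % m) = (-1) ^ k := by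
  conv_rhs => rw [← Nat.mod_add_div k m, pow_add, pow_mul,
    (even_iff_two_dvd.2 h).neg_one_pow, one_pow, mul_one]

theorem ZMod.neg_one_pow_val_natCast (h : 2 ∣ m) (k : ℕ) :
    (-1 : R) ^ (k : ZMod m).val = (-1) ^ k := by
  rw [ZMod.val_natCast, neg_one_pow_mod_of_two_dvd h]

theorem ZMod.neg_one_pow_val_add [NeZero m] (h : 2 ∣ m) (i j : ZMod m) :
    (-1 : R) ^ (i + j).val = (-1) ^ i.val * (-1) ^ j.val := by
  rw [← pow_add, ← ZMod.neg_one_pow_val_natCast h (i.val + j.val), Nat.cast_add,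
    ZMod.natCast_zmod_val, ZMod.natCast_zmod_val]

theorem ZMod.neg_one_pow_val_sub [NeZero m] (h : 2 ∣ m) (i j : ZMod m) :
    (-1 : R) ^ (i - j).val = (-1) ^ i.val * (-1) ^ j.val := by
  rw [← sub_add_cancel i j, ZMod.neg_one_pow_val_add h, add_sub_cancel_right, mul_assoc,
    ← pow_add, ← two_mul, pow_mul, neg_one_sq, one_pow, mul_one]

end NegOnePow

namespace QuaternionGroup

variable {n : ℕ} {R : Type*} [Ring R]

def homOfSqEqNegOne (hn : Odd n) (ι : R) (hι : ι ^ 2 = -1) : QuaternionGroup n →* R where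
  toFun
    | a i => (-1) ^ i.val
    | xa i => ι * (-1) ^ i.val
  map_one' := by
    show (-1 : R) ^ (0 : ZMod (2 * n)).val = 1
    rw [ZMod.val_zero, pow_zero]
  map_mul' := by
    have : NeZero (2 * n) := ⟨mul_ne_zero two_ne_zero hn.pos.ne'⟩
    have h2 : 2 ∣ 2 * n := dvd_mul_right 2 n
    have hcomm (k : ℕ) : (-1 : R) ^ k * ι = ι * (-1) ^ k :=
      ((Commute.neg_one_left ι).pow_left k).eq
    rintro (i | i) (j | j)
    · simp only [a_mul_a, ZMod.neg_one_pow_val_add h2]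
    · simp only [a_mul_xa, ZMod.neg_one_pow_val_sub h2, ← mul_assoc, hcomm]
      rw [mul_assoc, mul_assoc, ← pow_add, ← pow_add, add_comm]
    · simp only [xa_mul_a, ZMod.neg_one_pow_val_add h2, mul_assoc]
    · simp only [xa_mul_xa, ZMod.neg_one_pow_val_sub h2, ZMod.neg_one_pow_val_add h2,
        ZMod.neg_one_pow_val_natCast h2, hn.neg_one_pow]
      rw [mul_assoc ι, ← mul_assoc _ ι, hcomm, ← mul_assoc, ← mul_assoc, ← sq, hι, mul_assoc,
        mul_assoc, ← pow_add, ← pow_add, add_comm]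

@[simp]
theorem homOfSqEqNegOne_a (hn : Odd n) (ι : R) (hι : ι ^ 2 = -1) (i : ZMod (2 * n)) :
    homOfSqEqNegOne hn ι hι (a i) = (-1) ^ i.val :=
  rfl

@[simp]
theorem homOfSqEqNegOne_xa (hn : Odd n) (ι : R) (hι : ι ^ 2 = -1) (i : ZMod (2 * n)) :
    homOfSqEqNegOne hn ι hι (xa i) = ι * (-1) ^ i.val :=
  rfl

end QuaternionGroup

theorem Ideal.pow_sub_neg_one_pow_mem {R : Type*} [Ring R] {I : Ideal R} {x : R} (hx : x + 1 ∈ I)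
    (k : ℕ) : x ^ k - (-1) ^ k ∈ I := by
  rw [← (Commute.neg_one_right x).geom_sum₂_mul k]
  exact I.mul_mem_left _ (by rwa [sub_neg_eq_add])

theorem RingHom.ker_eq_of_forall_sub_mem {R S : Type*} [Ring R] [Semiring S] (f : R →+* S)
    {I : Ideal R} (hI : I ≤ RingHom.ker f) (s : S →+ R) (hs : ∀ x, x - s (f x) ∈ I) :
    RingHom.ker f = I := by
  refine le_antisymm (fun x hx => ?_) hI
  simpa [(RingHom.mem_ker).1 hx] using hs x

theorem GaussianInt.sqrtd_sq : (Zsqrtd.sqrtd : GaussianInt) ^ 2 = -1 := by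
  rw [sq, Zsqrtd.dmuld]
  rfl

namespace QR

open QuaternionGroup Zsqrtd

variable {n : ℕ}

noncomputable def toGaussianInt (hn : Odd n) : QR n →+* GaussianInt :=
  (lift ℤ GaussianInt _ (homOfSqEqNegOne hn sqrtd GaussianInt.sqrtd_sq)).toRingHom

theorem toGaussianInt_of (hn : Odd n) (g : QuaternionGroup n) :
    toGaussianInt hn (of ℤ _ g) = homOfSqEqNegOne hn sqrtd GaussianInt.sqrtd_sq g :=
  lift_of _ g

theorem toGaussianInt_Xq (hn : Odd n) : toGaussianInt hn (Xq n) = -1 := by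
  rw [Xq, toGaussianInt_of, homOfSqEqNegOne_a]
  simpa using ZMod.neg_one_pow_val_natCast (R := GaussianInt) (dvd_mul_right 2 n) 1

theorem toGaussianInt_Yq (hn : Odd n) : toGaussianInt hn (Yq n) = sqrtd := by
  rw [Yq, toGaussianInt_of, homOfSqEqNegOne_xa, ZMod.val_zero, pow_zero, mul_one]

noncomputable def ofGaussianInt (n : ℕ) : GaussianInt →+ QR n where
  toFun z := z.re + Yq n * z.im
  map_zero' := by simp
  map_add' z w := by
    simp only [Zsqrtd.re_add, Zsqrtd.im_add, Int.cast_add, mul_add]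
    abel

theorem ofGaussianInt_intCast (m : ℤ) : ofGaussianInt n m = m := by
  simp [ofGaussianInt]

theorem ofGaussianInt_sqrtd_mul_intCast (m : ℤ) :
    ofGaussianInt n (sqrtd * (m : GaussianInt)) = Yq n * m := by
  simp [ofGaussianInt]

theorem toGaussianInt_ofGaussianInt (hn : Odd n) (z : GaussianInt) :
    toGaussianInt hn (ofGaussianInt n z) = z := by
  simp only [ofGaussianInt, AddMonoidHom.coe_mk, ZeroHom.coe_mk, map_add, map_mul, map_intCast,
    toGaussianInt_Yq]
  ext <;> simp

theorem of_a [NeZero n] (i : ZMod (2 * n)) : of ℤ (QuaternionGroup n) (a i) = Xq n ^ i.val := by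
  rw [Xq, ← map_pow, a_one_pow, ZMod.natCast_zmod_val]

theorem of_xa [NeZero n] (i : ZMod (2 * n)) :
    of ℤ (QuaternionGroup n) (xa i) = Yq n * Xq n ^ i.val := by
  rw [Yq, ← of_a, ← map_mul, xa_mul_a, zero_add]

theorem sub_ofGaussianInt_toGaussianInt_mem (hn : Odd n) (x : QR n) :
    x - ofGaussianInt n (toGaussianInt hn x) ∈ Ideal.span {Xq n + 1} := by
  have : NeZero n := ⟨hn.pos.ne'⟩
  have hX : Xq n + 1 ∈ Ideal.span {Xq n + 1} := Ideal.subset_span rfl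
  have hcast (k : ℕ) : (-1 : GaussianInt) ^ k = (((-1 : ℤ) ^ k : ℤ) : GaussianInt) := by simp
  induction x using MonoidAlgebra.induction_on with
  | of g =>
    rcases g with i | i
    · rw [toGaussianInt_of, homOfSqEqNegOne_a, of_a, hcast, ofGaussianInt_intCast]
      push_cast
      exact Ideal.pow_sub_neg_one_pow_mem hX _
    · rw [toGaussianInt_of, homOfSqEqNegOne_xa, of_xa, hcast, ofGaussianInt_sqrtd_mul_intCast,
        ← mul_sub]
      push_cast
      exact Ideal.mul_mem_left _ _ (Ideal.pow_sub_neg_one_pow_mem hX _)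
  | add x y hx hy =>
    rw [map_add, map_add, add_sub_add_comm]
    exact add_mem hx hy
  | smul r x hx =>
    rw [map_zsmul, map_zsmul, ← smul_sub]
    exact Submodule.smul_of_tower_mem _ r hx

end QR

/-- `ℤQ_{4n}/⟨x+1⟩ ≅ ℤ[i]` via `x ↦ -1`, `y ↦ i`: there is a surjective ring homomorphism
`ℤQ_{4n} → ℤ[i]` sending `x` to `-1` and `y` to `i`, whose kernel is the ideal `⟨x+1⟩`. -/
theorem stmt6 (n : ℕ) (hn : Odd n) :
    ∃ f : QR n →+* GaussianInt,
      f (Xq n) = -1 ∧ f (Yq n) = Zsqrtd.sqrtd ∧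
      Function.Surjective f ∧ RingHom.ker f = Ideal.span {Xq n + 1} := by
  refine ⟨QR.toGaussianInt hn, QR.toGaussianInt_Xq hn, QR.toGaussianInt_Yq hn,
    Function.RightInverse.surjective (QR.toGaussianInt_ofGaussianInt hn), ?_⟩
  refine RingHom.ker_eq_of_forall_sub_mem _ ?_ (QR.ofGaussianInt n)
    (QR.sub_ofGaussianInt_toGaussianInt_mem hn)
  rw [Ideal.span_le, Set.singleton_subset_iff, SetLike.mem_coe, RingHom.mem_ker, map_add,
    QR.toGaussianInt_Xq, map_one, neg_add_cancel]
end

section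
/- Let n be odd, gcd(a²+b², 2n)=1, and P = ⟨a+by, x+1⟩ ⊆ ZQ_{4n}. Then P is isomorphic as a ZQ_{4n}-module to the pullback {(c,d) ∈ P/⟨x^n+1⟩P ⊕ ZD_{2n} : c̄ = d̄ in F₂D_{2n}}. -/
open MonoidAlgebra

abbrev ZD (n : ℕ) : Type := MonoidAlgebra ℤ (DihedralGroup n)

abbrev F2D (n : ℕ) : Type := MonoidAlgebra (ZMod 2) (DihedralGroup n)

noncomputable def Pideal (n : ℕ) (a b : ℤ) : Ideal (QR n) :=
  Ideal.span {(a : QR n) + (b : QR n) * Yq n, Xq n + 1}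

/-- `⟨xⁿ+1⟩P`, as a submodule of `P` -/
noncomputable def xnP (n : ℕ) (a b : ℤ) : Submodule (QR n) (Pideal n a b) :=
  Submodule.comap (Pideal n a b).subtype
    (Submodule.span (QR n) ((fun w => (Xq n ^ n + 1) * w) '' (Pideal n a b : Set (QR n))))

/-!
Let `π : ℤQ_{4n} → ℤD_{2n}` be induced by `Q_{4n} → Q_{4n}/⟨xⁿ⟩ = D_{2n}`; the isomorphism is
`p ↦ (p mod (xⁿ+1)P, π p)`. Since `xⁿ` is central of order two, `xⁿ + 1` annihilates `ker π`
(the fibres of `Q_{4n} → D_{2n}` are the cosets of `⟨xⁿ⟩`), while `π (xⁿ + 1) = 2`; as `ℤD_{2n}` is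
torsion-free this gives injectivity. For the image: `n` odd puts `xⁿ + 1` in `P`, so `2 ∈ π P`, and
with `s = π y` also `(a - b s)(a + b s) = a² - b² ∈ π P`, which is odd; hence `π P = ℤD_{2n}`. A pair
`(p̄, d)` of the pullback then has `d - π p = 2 π q` with `q ∈ P`, and `p + (xⁿ+1) q` maps to it.
-/

theorem Ideal.pow_add_one_mem_of_odd {R : Type*} [Ring R] {I : Ideal R} {x : R} {n : ℕ}
    (hn : Odd n) (hx : x + 1 ∈ I) : x ^ n + 1 ∈ I := by
  have h := geom_sum_mul (-x) n
  rw [hn.neg_pow, ← neg_add', ← neg_add', mul_neg, neg_inj] at h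
  exact h ▸ I.mul_mem_left _ hx

theorem Ideal.eq_top_of_intCast_mem {R : Type*} [Ring R] {I : Ideal R} {m k : ℤ}
    (hm : (m : R) ∈ I) (hk : (k : R) ∈ I) (h : IsCoprime m k) : I = ⊤ := by
  obtain ⟨u, v, huv⟩ := h
  rw [Ideal.eq_top_iff_one, ← Int.cast_one, ← huv]
  push_cast
  exact I.add_mem (I.mul_mem_left _ hm) (I.mul_mem_left _ hk)

theorem ZMod.eq_zero_or_eq_of_cast_eq_zero {n : ℕ} [NeZero n] {i : ZMod (2 * n)}
    (hi : (i.cast : ZMod n) = 0) : i = 0 ∨ i = n := by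
  rw [← ZMod.natCast_val, ZMod.natCast_eq_zero_iff] at hi
  obtain ⟨c, hc⟩ := hi
  have hc2 : c < 2 := by
    by_contra! h
    have := ZMod.val_lt i
    nlinarith [NeZero.pos n]
  rw [← ZMod.natCast_zmod_val i, hc]
  interval_cases c <;> simp

namespace QuaternionGroup
variable {n : ℕ}

def toDihedralGroup (n : ℕ) : QuaternionGroup n →* DihedralGroup n where
  toFun
    | a i => .r (ZMod.castHom (dvd_mul_left n 2) (ZMod n) i)
    | xa i => .sr (ZMod.castHom (dvd_mul_left n 2) (ZMod n) i)
  map_one' := by rw [one_def]; simp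
  map_mul' := by
    rintro (i | i) (j | j) <;> simp

theorem toDihedralGroup_xa (i : ZMod (2 * n)) :
    toDihedralGroup n (xa i) = .sr (i.cast : ZMod n) := rfl

theorem toDihedralGroup_a_n : toDihedralGroup n (a n) = 1 := by
  simp [toDihedralGroup]

theorem toDihedralGroup_surjective : Function.Surjective (toDihedralGroup n) := by
  rintro (j | j) <;>
    obtain ⟨i, rfl⟩ := ZMod.ringHom_surjective (ZMod.castHom (dvd_mul_left n 2) (ZMod n)) j
  exacts [⟨a i, rfl⟩, ⟨xa i, rfl⟩]

theorem commute_a_n (g : QuaternionGroup n) : Commute (a n) g := by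
  rcases g with i | i
  · simp [Commute, SemiconjBy, add_comm]
  · have h2n : (n : ZMod (2 * n)) + n = 0 := by
      rw [← two_mul]; exact_mod_cast ZMod.natCast_self (2 * n)
    simp only [Commute, SemiconjBy, a_mul_xa, xa_mul_a, xa.injEq]
    linear_combination -h2n

theorem toDihedralGroup_eq_one [NeZero n] {k : QuaternionGroup n} (hk : toDihedralGroup n k = 1) :
    k = 1 ∨ k = a n := by
  rcases k with i | i
  · obtain hi | hi := ZMod.eq_zero_or_eq_of_cast_eq_zero (DihedralGroup.r.inj hk)
    exacts [.inl (by rw [hi, a_zero]), .inr (by rw [hi])]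
  · cases hk

theorem toDihedralGroup_eq_iff [NeZero n] {g g' : QuaternionGroup n} :
    toDihedralGroup n g = toDihedralGroup n g' ↔ g' = g ∨ g' = g * a n := by
  constructor
  · intro h
    have hk : toDihedralGroup n (g⁻¹ * g') = 1 := by rw [map_mul, map_inv, h, inv_mul_cancel]
    rw [← mul_inv_cancel_left g g']
    obtain hk | hk := toDihedralGroup_eq_one hk <;> simp [hk]
  · rintro (rfl | rfl) <;> simp [toDihedralGroup_a_n]

theorem monoidHom_ext [NeZero n] {M : Type*} [Monoid M] {f f' : QuaternionGroup n →* M}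
    (ha : f (a 1) = f' (a 1)) (hxa : f (xa 0) = f' (xa 0)) : f = f' := by
  have hpow : ∀ i : ZMod (2 * n), a i = a 1 ^ i.val := fun i => by
    rw [a_one_pow, ZMod.natCast_zmod_val]
  ext (i | i)
  · rw [hpow, map_pow, map_pow, ha]
  · rw [← zero_add i, ← xa_mul_a, hpow, map_mul, map_mul, map_pow, map_pow, ha, hxa]

end QuaternionGroup

namespace MonoidAlgebra
variable {R S G H : Type*} [Semiring R]

theorem mapDomain_surjective {f : G → H} (hf : Function.Surjective f) :
    Function.Surjective (mapDomain (R := R) f) := by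
  intro y
  obtain ⟨x, hx⟩ := Finsupp.mapDomain_surjective hf y.coeff
  exact ⟨ofCoeff x, by ext1; simpa [mapDomain] using hx⟩

theorem mul_eq_zero_of_mapDomain_eq_zero [Monoid G] {f : G → H} {t : R[G]}
    (ht : ∀ g g', f g = f g' → of R G g * t = of R G g' * t) {z : R[G]}
    (hz : mapDomain f z = 0) : z * t = 0 := by
  set σ := Function.invFun f
  -- `σ ∘ f` moves each element only within its fibre, which `ht` says right multiplication by
  -- `t` cannot see.
  have key : ∀ x : R[G], mapDomain σ (mapDomain f x) * t = x * t := by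
    intro x
    induction x using MonoidAlgebra.induction_linear with
    | zero => simp only [mapDomain_zero]
    | add x y hx hy => simp only [mapDomain_add, add_mul, hx, hy]
    | single g r =>
      have hσ : f (σ (f g)) = f g := Function.invFun_eq ⟨g, rfl⟩
      have hsingle : ∀ g : G, single g r = single 1 r * of R G g := fun g => by
        simp [single_mul_single]
      rw [mapDomain_single, mapDomain_single, hsingle (σ (f g)), hsingle g, mul_assoc, mul_assoc,
        ht _ _ hσ]
  rw [← key z, hz, mapDomain_zero, zero_mul]

theorem intCast_mul_eq_map [Monoid G] (m : ℤ) (x : ℤ[G]) :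
    (m : ℤ[G]) * x = map (AddMonoidHom.mulLeft m) x := by
  ext
  simp [← zsmul_eq_mul]

theorem intCast_mul_injective [Monoid G] {m : ℤ} (hm : m ≠ 0) :
    Function.Injective ((m : ℤ[G]) * ·) := by
  simpa only [intCast_mul_eq_map] using map_injective _ (mul_right_injective₀ hm)

theorem exists_eq_natCast_mul_of_mapRingHom_eq_zero [Monoid G] {m : ℕ} {x : ℤ[G]}
    (hx : mapRingHom G (Int.castRingHom (ZMod m)) x = 0) : ∃ y, x = m * y := by
  have hdvd : ∀ g, (m : ℤ) ∣ x.coeff g := fun g => by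
    rw [← ZMod.intCast_zmod_eq_zero_iff_dvd]
    simpa using congr(($hx).coeff g)
  have hx : x ∈ Set.range (map (M := G) (AddMonoidHom.mulLeft (m : ℤ))) :=
    (range_map _).ge fun g => ⟨_, Int.mul_ediv_cancel' (hdvd g)⟩
  obtain ⟨y, rfl⟩ := hx
  exact ⟨y, by rw [← intCast_mul_eq_map]; rfl⟩

theorem ringHom_eq_mapRingHom [Monoid G] [Ring S] {f : ℤ[G] →+* S[G]}
    (hf : ∀ g, f (of ℤ G g) = of S G g) : f = mapRingHom G (Int.castRingHom S) :=
  ringHom_ext' (Subsingleton.elim _ _) (MonoidHom.ext fun g => by simpa using hf g)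

end MonoidAlgebra

noncomputable def toZD (n : ℕ) : QR n →+* ZD n :=
  mapDomainRingHom ℤ (QuaternionGroup.toDihedralGroup n)

section
variable {n : ℕ}

theorem toZD_of (g : QuaternionGroup n) :
    toZD n (of ℤ _ g) = of ℤ _ (QuaternionGroup.toDihedralGroup n g) := by
  simp [toZD]

theorem toZD_surjective : Function.Surjective (toZD n) :=
  mapDomain_surjective QuaternionGroup.toDihedralGroup_surjective

theorem ringHom_eq_toZD [NeZero n] {f : QR n →+* ZD n}
    (hx : f (Xq n) = of ℤ (DihedralGroup n) (DihedralGroup.r 1))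
    (hy : f (Yq n) = of ℤ (DihedralGroup n) (DihedralGroup.sr 0)) : f = toZD n :=
  ringHom_ext' (Subsingleton.elim _ _) (QuaternionGroup.monoidHom_ext
    (by simpa [Xq, toZD, QuaternionGroup.toDihedralGroup] using hx)
    (by simpa [Yq, toZD, QuaternionGroup.toDihedralGroup] using hy))

theorem Xq_pow (k : ℕ) : Xq n ^ k = of ℤ (QuaternionGroup n) (.a k) := by
  rw [Xq, ← map_pow, QuaternionGroup.a_one_pow]

theorem toZD_Xq_pow_add_one : toZD n (Xq n ^ n + 1) = 2 := by
  rw [map_add, map_one, Xq_pow, toZD_of, QuaternionGroup.toDihedralGroup_a_n, map_one,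
    one_add_one_eq_two]

theorem commute_Xq_pow_add_one (w : QR n) : Commute (Xq n ^ n + 1) w := by
  rw [Xq_pow]
  exact (of_commute QuaternionGroup.commute_a_n w).add_left (Commute.one_left w)

theorem mul_Xq_pow_add_one_eq_zero [NeZero n] {z : QR n} (hz : toZD n z = 0) :
    z * (Xq n ^ n + 1) = 0 := by
  refine mul_eq_zero_of_mapDomain_eq_zero (fun g g' hg => ?_) hz
  obtain rfl | rfl := QuaternionGroup.toDihedralGroup_eq_iff.mp hg
  · rfl
  · have han : QuaternionGroup.a n * QuaternionGroup.a n = (1 : QuaternionGroup n) := by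
      rw [QuaternionGroup.a_mul_a, ← Nat.cast_add, ← two_mul, ZMod.natCast_self,
        QuaternionGroup.a_zero]
    rw [Xq_pow, mul_add, mul_add, mul_one, mul_one, ← map_mul, ← map_mul, mul_assoc, han,
      mul_one, add_comm]

end

section
variable {n : ℕ} {a b : ℤ}

theorem Xq_pow_add_one_mem_Pideal (hn : Odd n) : Xq n ^ n + 1 ∈ Pideal n a b :=
  Ideal.pow_add_one_mem_of_odd hn (Ideal.subset_span (by simp))

theorem mem_xnP_iff {p : Pideal n a b} :
    p ∈ xnP n a b ↔ ∃ q ∈ Pideal n a b, (Xq n ^ n + 1) * q = p := by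
  have himage : (fun w => (Xq n ^ n + 1) * w) '' (Pideal n a b : Set (QR n)) =
      LinearMap.toSpanSingleton (QR n) (QR n) (Xq n ^ n + 1) '' (Pideal n a b) :=
    Set.image_congr fun w _ => (commute_Xq_pow_add_one w).eq
  rw [xnP, Submodule.mem_comap, himage, Submodule.span_image, Submodule.span_eq]
  simp [(commute_Xq_pow_add_one _).eq]

theorem map_toZD_Pideal (hn : Odd n) (hab : IsCoprime (a ^ 2 - b ^ 2) 2) :
    (Pideal n a b).map (toZD n) = ⊤ := by
  set s := of ℤ (DihedralGroup n) (DihedralGroup.sr 0)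
  have hs : s * s = 1 := by rw [← map_mul, DihedralGroup.sr_mul_self, map_one]
  have hgen : (a : ZD n) + b * s ∈ (Pideal n a b).map (toZD n) := by
    have := Ideal.mem_map_of_mem (toZD n) (Ideal.subset_span (Set.mem_insert _ _) :
      (a : QR n) + b * Yq n ∈ Pideal n a b)
    rwa [map_add, map_mul, map_intCast, map_intCast, Yq, toZD_of,
      QuaternionGroup.toDihedralGroup_xa, ZMod.cast_zero] at this
  have hnorm : ((a : ZD n) - b * s) * (a + b * s) = ((a ^ 2 - b ^ 2 : ℤ) : ZD n) := by
    have hbs : (b * s) * (b * s) = (b * b : ZD n) := by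
      rw [mul_assoc, ← mul_assoc s, ← (Int.cast_commute b s).eq, mul_assoc, hs, mul_one]
    rw [← ((Int.cast_commute a _).mul_right (Int.cast_commute a s)).mul_self_sub_mul_self_eq',
      hbs]
    push_cast
    rw [sq, sq]
  refine Ideal.eq_top_of_intCast_mem ?_ ?_ hab
  · exact hnorm ▸ Ideal.mul_mem_left _ _ hgen
  · have := Ideal.mem_map_of_mem (toZD n) (Xq_pow_add_one_mem_Pideal (a := a) (b := b) hn)
    rwa [toZD_Xq_pow_add_one, ← Int.cast_two] at this

theorem eq_zero_of_mem_xnP [NeZero n] {p : Pideal n a b} (hp : p ∈ xnP n a b)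
    (hp0 : toZD n p = 0) : p = 0 := by
  obtain ⟨q, -, hqp⟩ := mem_xnP_iff.mp hp
  rw [← hqp, map_mul, toZD_Xq_pow_add_one] at hp0
  have hq : toZD n q = 0 := intCast_mul_injective (m := 2) two_ne_zero (by simpa using hp0)
  rw [← Subtype.coe_inj, ← hqp, (commute_Xq_pow_add_one q).eq, mul_Xq_pow_add_one_eq_zero hq]
  rfl

theorem exists_mem_xnP_toZD_eq_two_mul (hn : Odd n) (hab : IsCoprime (a ^ 2 - b ^ 2) 2)
    (e : ZD n) : ∃ w ∈ xnP n a b, toZD n w = 2 * e := by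
  obtain ⟨q, hq, rfl⟩ := (Ideal.mem_map_iff_of_surjective _ toZD_surjective).mp
    ((map_toZD_Pideal hn hab).symm ▸ Submodule.mem_top : e ∈ (Pideal n a b).map (toZD n))
  exact ⟨⟨_, (Pideal n a b).mul_mem_left _ hq⟩, mem_xnP_iff.mpr ⟨q, hq, rfl⟩,
    by simp [toZD_Xq_pow_add_one]⟩

theorem isCoprime_sq_sub_sq_two_of_gcd_eq_one (hco : Int.gcd (a ^ 2 + b ^ 2) (2 * n) = 1) :
    IsCoprime (a ^ 2 - b ^ 2) 2 := by
  have h := (Int.isCoprime_iff_gcd_eq_one.mpr hco).of_isCoprime_of_dvd_right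
    (Dvd.intro (n : ℤ) rfl : (2 : ℤ) ∣ 2 * n)
  have hsub : a ^ 2 + b ^ 2 + 2 * -b ^ 2 = a ^ 2 - b ^ 2 := by ring
  exact hsub ▸ h.add_mul_left_left (-b ^ 2)

end

/-- `P` is isomorphic as a `ℤQ_{4n}`-module to the pullback
`{(c,d) ∈ P/⟨xⁿ+1⟩P ⊕ ℤD_{2n} : c̄ = d̄ in 𝔽₂D_{2n}}` associated to the Milnor square.
Here `f2 : ℤQ_{4n} → ℤD_{2n}` is induced by the group surjection `Q_{4n} → D_{2n}`
(`x ↦ r 1`, `y ↦ sr 0`), `g2` is reduction of coefficients mod `2`, and the isomorphism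
is expressed as an injective additive map `j`, equivariant for the `ℤQ_{4n}`-actions
(on the `ℤD_{2n}` factor, `r` acts through multiplication by `f2 r`), whose image is
exactly the pullback set. -/
theorem stmt9 (n : ℕ) (a b : ℤ) (hn : Odd n)
    (hco : Int.gcd (a ^ 2 + b ^ 2) (2 * n) = 1)
    (f2 : QR n →+* ZD n) (g2 : ZD n →+* F2D n)
    (hf2x : f2 (Xq n) = of ℤ (DihedralGroup n) (DihedralGroup.r 1))
    (hf2y : f2 (Yq n) = of ℤ (DihedralGroup n) (DihedralGroup.sr 0))
    (hg2 : ∀ d : DihedralGroup n, g2 (of ℤ (DihedralGroup n) d) = of (ZMod 2) (DihedralGroup n) d) :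
    ∃ j : (Pideal n a b : Type) →+ (Pideal n a b ⧸ xnP n a b) × ZD n,
      Function.Injective j ∧
      (∀ (r : QR n) (p : Pideal n a b),
        j (r • p) = (r • (j p).1, f2 r * (j p).2)) ∧
      Set.range j =
        {cd | ∃ p : Pideal n a b,
          Submodule.Quotient.mk p = cd.1 ∧ g2 (f2 (p : QR n)) = g2 cd.2} := by
  have : NeZero n := ⟨hn.pos.ne'⟩
  obtain rfl := ringHom_eq_toZD hf2x hf2y
  obtain rfl := ringHom_eq_mapRingHom hg2
  have hab := isCoprime_sq_sub_sq_two_of_gcd_eq_one hco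
  refine ⟨(xnP n a b).mkQ.toAddMonoidHom.prod
    ((toZD n).toAddMonoidHom.comp (Pideal n a b).subtype.toAddMonoidHom), ?_, ?_, ?_⟩
  · refine (injective_iff_map_eq_zero _).mpr fun p hp => ?_
    obtain ⟨hpx, hpz⟩ := Prod.mk_eq_zero.mp hp
    exact eq_zero_of_mem_xnP ((Submodule.Quotient.mk_eq_zero _).mp hpx) hpz
  · exact fun r p => by simp
  · ext ⟨c, d⟩
    refine ⟨fun ⟨p, hp⟩ => hp ▸ ⟨p, rfl, rfl⟩, ?_⟩
    rintro ⟨p, rfl, hpd⟩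
    obtain ⟨e, he⟩ := exists_eq_natCast_mul_of_mapRingHom_eq_zero (m := 2)
      (x := d - toZD n p) (by rw [map_sub, hpd, sub_self])
    obtain ⟨w, hw, hwe⟩ := exists_mem_xnP_toZD_eq_two_mul hn hab e
    refine ⟨p + w, Prod.ext ?_ ?_⟩
    · simpa using (Submodule.Quotient.mk_eq_zero _).mpr hw
    · rw [sub_eq_iff_eq_add', Nat.cast_ofNat] at he
      simp [hwe, he]
end
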